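/- With Γ ⊂ ℝⁿ a nonempty compact C¹-smooth embedded submanifold of dimension k (1 ≤ k ≤ n−1), ρ > 0 satisfying δ(p, r) > r/2 for all p ∈ Γ and 0 < r < 2ρ, and W ⊂ ℝ^{n+1} defined as below: if {(x_i, y_i)} is a sequence of points of W such that y_i → 0+ as i → ∞, then d(x_i)/y_i → 0, where d(x) = dist(x, Γ) is the Euclidean distance from x to Γ in ℝⁿ. -/

import Mathlib

/-!
Membership of `(x, y)` in `W` gives `d(x) ≤ y`, and `d(z)² ≤ |x - z|² + y²` whenever `d(z) ≤ 2ρ`.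
Let `p ∈ Γ` be a nearest point to `x` and `z = p + M (x - p)`, so `|x - z| = (M - 1) d(x)`.
By Lagrange multipliers `x - p` is normal to `Γ` at `p`, and since `Γ` is a compact C¹ submanifold
short chords of `Γ` are uniformly almost tangent; hence the distance to `Γ` grows at almost unit
speed along normal rays: `d(z)² ≥ (1 - M⁻²) M² d(x)²` once `M d(x)` is small.
Together these give `2 (M - 1) d(x)² ≤ y²` for small `y`, with `M` arbitrary.
-/

open Metric Set Filter
open scoped RealInnerProductSpace

noncomputable section

/-- `ℝⁿ` as a Euclidean space. -/
abbrev En (n : ℕ) : Type := EuclideanSpace ℝ (Fin n)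

/-- `ℝ^{n+1}` identified with `ℝⁿ × ℝ`, with the Euclidean (L²) norm. -/
abbrev En1 (n : ℕ) : Type := WithLp 2 (En n × ℝ)

/-- The identification of the plain product `ℝⁿ × ℝ` with the L²-product. -/
def emb1 (n : ℕ) : En n × ℝ → En1 n := (WithLp.equiv 2 (En n × ℝ)).symm

/-- First (ℝⁿ) coordinate of a point of `ℝ^{n+1} = ℝⁿ × ℝ`. -/
def fst1 (n : ℕ) (q : En1 n) : En n := ((WithLp.equiv 2 (En n × ℝ)) q).1

/-- Second (ℝ) coordinate of a point of `ℝ^{n+1} = ℝⁿ × ℝ`. -/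
def snd1 (n : ℕ) (q : En1 n) : ℝ := ((WithLp.equiv 2 (En n × ℝ)) q).2

/-- The (Federer) tangent cone of a set `S` at a point `p`: all vectors `w` for which
there are sequences `q i ∈ S` and `c i > 0` with `q i → p` and `c i • (q i − p) → w`. -/
def fTan {E : Type*} [NormedAddCommGroup E] [NormedSpace ℝ E] (S : Set E) (p : E) : Set E :=
  {w | ∃ (q : ℕ → E) (c : ℕ → ℝ), (∀ i, q i ∈ S) ∧ (∀ i, 0 < c i) ∧
    Filter.Tendsto q Filter.atTop (nhds p) ∧
    Filter.Tendsto (fun i => c i • (q i - p)) Filter.atTop (nhds w)}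

/-- A unit normal to `Γ` at `p`: a unit vector orthogonal to the tangent space
(= tangent cone, for a C¹ submanifold) of `Γ` at `p`. -/
def IsUnitNormal {n : ℕ} (Γ : Set (En n)) (p ν : En n) : Prop :=
  ‖ν‖ = 1 ∧ ∀ w ∈ fTan Γ p, inner ℝ ν w = (0 : ℝ)

/-- `δ(p, r) = inf_ν dist(p + rν, Γ)`, the infimum over all unit normals `ν` to `Γ` at `p`. -/
def deltaG {n : ℕ} (Γ : Set (En n)) (p : En n) (r : ℝ) : ℝ :=
  sInf {d : ℝ | ∃ ν : En n, IsUnitNormal Γ p ν ∧ d = Metric.infDist (p + r • ν) Γ}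

/-- `Γ ⊆ ℝⁿ` is a C¹-smooth embedded submanifold of dimension `k`: near each of its points
it is the regular zero level set of a C¹ map into `ℝ^{n-k}`. -/
def IsC1Submanifold {n : ℕ} (k : ℕ) (Γ : Set (En n)) : Prop :=
  ∀ p ∈ Γ, ∃ (V : Set (En n)) (f : En n → EuclideanSpace ℝ (Fin (n - k))),
    IsOpen V ∧ p ∈ V ∧ ContDiffOn ℝ 1 f V ∧
    Γ ∩ V = {y ∈ V | f y = 0} ∧
    ∀ y ∈ V, Function.Surjective ⇑(fderivWithin ℝ f V y)

/-- The set `W = (ℝⁿ × (0, ρ)) \ ( ⋃_{d(x) > 2ρ} B_{2ρ}((x,0)) ∪ ⋃_{d(x) ≤ 2ρ} B_{d(x)}((x,0)) )`,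
where `d(x) = dist(x, Γ)`. -/
def Wset {n : ℕ} (Γ : Set (En n)) (ρ : ℝ) : Set (En1 n) :=
  {q : En1 n | 0 < snd1 n q ∧ snd1 n q < ρ} \
    ((⋃ x ∈ {x : En n | 2 * ρ < Metric.infDist x Γ}, Metric.ball (emb1 n (x, 0)) (2 * ρ)) ∪
     (⋃ x ∈ {x : En n | Metric.infDist x Γ ≤ 2 * ρ},
        Metric.ball (emb1 n (x, 0)) (Metric.infDist x Γ)))

open scoped Topology

section Adjoint

variable {E F : Type*} [NormedAddCommGroup E] [InnerProductSpace ℝ E] [CompleteSpace E]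
  [NormedAddCommGroup F] [InnerProductSpace ℝ F] [FiniteDimensional ℝ F]

open ContinuousLinearMap

lemma ContinuousLinearMap.exists_pos_eventually_mul_norm_le_norm_adjoint (A₀ : E →L[ℝ] F)
    (hA₀ : Function.Surjective A₀) :
    ∃ c > 0, ∀ᶠ A in 𝓝 A₀, ∀ v, c * ‖v‖ ≤ ‖adjoint A v‖ := by
  have hker : (adjoint A₀).ker = ⊥ := by
    rw [← orthogonal_range, LinearMap.range_eq_top.2 hA₀, Submodule.top_orthogonal_eq_bot]
  obtain ⟨K, hK, hanti⟩ := (adjoint A₀ : F →ₗ[ℝ] E).exists_antilipschitzWith hker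
  have hK' : (0 : ℝ) < K := hK
  refine ⟨(2 * (K : ℝ))⁻¹, by positivity, ?_⟩
  filter_upwards [ball_mem_nhds A₀ (show (0 : ℝ) < (2 * K)⁻¹ by positivity)] with A hA v
  have h₀ : ‖v‖ ≤ K * ‖adjoint A₀ v‖ := ZeroHomClass.bound_of_antilipschitz _ hanti v
  have hdiff : ‖adjoint (A - A₀) v‖ ≤ (2 * (K : ℝ))⁻¹ * ‖v‖ := by
    refine ((adjoint (A - A₀)).le_opNorm v).trans (mul_le_mul_of_nonneg_right ?_ (norm_nonneg v))
    rw [LinearIsometryEquiv.norm_map, ← dist_eq_norm]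
    exact (mem_ball.1 hA).le
  have htri : ‖adjoint A₀ v‖ ≤ ‖adjoint A v‖ + ‖adjoint (A - A₀) v‖ := by
    rw [map_sub, sub_apply, norm_sub_rev]
    exact norm_le_norm_add_norm_sub' _ _
  field_simp at hdiff ⊢
  nlinarith

lemma ContinuousLinearMap.inner_le_of_mem_orthogonal_ker (A : E →L[ℝ] F) {c : ℝ} (hc : 0 < c)
    (hA : ∀ v, c * ‖v‖ ≤ ‖adjoint A v‖) {w : E} (hw : w ∈ A.kerᗮ) (u : E) :
    ⟪w, u⟫ ≤ c⁻¹ * ‖w‖ * ‖A u‖ := by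
  rw [orthogonal_ker, (adjoint A).range.closed_of_finiteDimensional.submodule_topologicalClosure_eq]
    at hw
  obtain ⟨v, rfl⟩ := hw
  calc ⟪adjoint A v, u⟫ = ⟪v, A u⟫ := adjoint_inner_left A u v
    _ ≤ ‖v‖ * ‖A u‖ := real_inner_le_norm v (A u)
    _ ≤ c⁻¹ * ‖adjoint A v‖ * ‖A u‖ := by
      gcongr
      rw [le_inv_mul_iff₀ hc]
      exact hA v

end Adjoint

section Lagrange

variable {E F : Type*} [NormedAddCommGroup E] [InnerProductSpace ℝ E] [CompleteSpace E]
  [NormedAddCommGroup F] [NormedSpace ℝ F] [CompleteSpace F]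

lemma IsLocalMinOn.inner_sub_eq_zero_of_map_eq_zero {g : E → F} {g' : E →L[ℝ] F} {x p : E}
    (hmin : IsLocalMinOn (dist x) {q | g q = g p} p) (hg : HasStrictFDerivAt g g' p)
    (hg' : Function.Surjective g') {v : E} (hv : g' v = 0) : ⟪x - p, v⟫ = 0 := by
  have hφ : HasStrictFDerivAt (fun q => ‖q - x‖ ^ 2) (2 • innerSL ℝ (p - x)) p :=
    (hasStrictFDerivAt_norm_sq (p - x)).comp p ((hasStrictFDerivAt_id p).sub_const x)
  have hextr : IsLocalExtrOn (fun q => ‖q - x‖ ^ 2) {q | g q = g p} p := by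
    refine IsMinFilter.isExtr ?_
    filter_upwards [hmin] with q hq
    simp only [← dist_eq_norm, dist_comm _ x]
    exact pow_le_pow_left₀ dist_nonneg hq 2
  obtain ⟨Λ, Λ₀, hΛne, hΛ⟩ := hextr.exists_linear_map_of_hasStrictFDerivAt hg hφ
  have hΛ₀ : Λ₀ ≠ 0 := by
    rintro rfl
    refine hΛne (Prod.ext (LinearMap.ext fun w => ?_) rfl)
    obtain ⟨u, rfl⟩ := hg' w
    simpa using hΛ u
  have h := hΛ v
  rw [hv, map_zero, zero_add, smul_eq_zero] at h
  have h' := h.resolve_left hΛ₀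
  simp only [smul_apply, innerSL_apply_apply, nsmul_eq_mul, Nat.cast_ofNat] at h'
  rw [← neg_sub, inner_neg_left]
  linarith

end Lagrange

lemma IsC1Submanifold.exists_ball_inner_le {n k : ℕ} {Γ : Set (En n)}
    (hman : IsC1Submanifold k Γ) {p₀ : En n} (hp₀ : p₀ ∈ Γ) {ε : ℝ} (hε : 0 < ε) :
    ∃ δ > 0, ∀ x p q, p ∈ Γ → q ∈ Γ → p ∈ ball p₀ δ → q ∈ ball p₀ δ →
      infDist x Γ = dist x p → ⟪x - p, q - p⟫ ≤ ε * ‖x - p‖ * ‖q - p‖ := by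
  obtain ⟨V, f, hV, hp₀V, hf, hΓV, hsurj⟩ := hman p₀ hp₀
  have hfd : ∀ z ∈ V, fderivWithin ℝ f V z = fderiv ℝ f z := fun z hz =>
    fderivWithin_of_isOpen hV hz
  have hC1 : ∀ z ∈ V, ContDiffAt ℝ 1 f z := fun z hz => hf.contDiffAt (hV.mem_nhds hz)
  have hzero : ∀ z ∈ Γ, z ∈ V → f z = 0 := fun z hz hzV =>
    (hΓV.subset ⟨hz, hzV⟩ : z ∈ {y ∈ V | f y = 0}).2
  obtain ⟨c, hc, hlow⟩ := (fderiv ℝ f p₀).exists_pos_eventually_mul_norm_le_norm_adjoint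
    (hfd p₀ hp₀V ▸ hsurj p₀ hp₀V)
  have hcont : ContinuousAt (fderiv ℝ f) p₀ :=
    ((hC1 p₀ hp₀V).fderiv_right (m := 0) le_rfl).continuousAt
  obtain ⟨δ, hδ, hball⟩ := eventually_nhds_iff_ball.1 ((hV.eventually_mem hp₀V).and
    ((hcont.eventually hlow).and (hcont.eventually (ball_mem_nhds _ (half_pos (mul_pos hε hc))))))
  refine ⟨δ, hδ, fun x p q hp hq hpδ hqδ hxp => ?_⟩
  obtain ⟨hpV, hplow, hpnear⟩ := hball p hpδ
  -- the chord `q - p` is almost in the kernel of `f'(p)`, by the mean value inequality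
  have hchord : ‖fderiv ℝ f p (q - p)‖ ≤ ε * c * ‖q - p‖ := by
    have hmvt := (convex_ball p₀ δ).norm_image_sub_le_of_norm_fderiv_le' (φ := fderiv ℝ f p)
      (C := ε * c) (fun z hz => (hC1 z (hball z hz).1).differentiableAt one_ne_zero)
      (fun z hz => ?_) hpδ hqδ
    · rwa [hzero q hq (hball q hqδ).1, hzero p hp hpV, sub_zero, zero_sub, norm_neg] at hmvt
    · rw [← dist_eq_norm]
      linarith [dist_triangle_right (fderiv ℝ f z) (fderiv ℝ f p) (fderiv ℝ f p₀),
        mem_ball.1 (hball z hz).2.2, mem_ball.1 hpnear]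
  have hnormal : x - p ∈ (fderiv ℝ f p).kerᗮ := by
    refine (Submodule.mem_orthogonal' _ _).2 fun v hv =>
      IsLocalMinOn.inner_sub_eq_zero_of_map_eq_zero ?_
        ((hC1 p hpV).hasStrictFDerivAt one_ne_zero) (hfd p hpV ▸ hsurj p hpV) hv
    filter_upwards [mem_nhdsWithin_of_mem_nhds (hV.mem_nhds hpV), self_mem_nhdsWithin]
      with q hqV hq
    rw [← hxp]
    exact infDist_le_dist_of_mem (hΓV.superset ⟨hqV, hq.trans (hzero p hp hpV)⟩).1
  calc ⟪x - p, q - p⟫ ≤ c⁻¹ * ‖x - p‖ * ‖fderiv ℝ f p (q - p)‖ :=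
        (fderiv ℝ f p).inner_le_of_mem_orthogonal_ker hc hplow hnormal (q - p)
    _ ≤ c⁻¹ * ‖x - p‖ * (ε * c * ‖q - p‖) := by gcongr
    _ = ε * ‖x - p‖ * ‖q - p‖ := by field_simp

lemma IsC1Submanifold.exists_inner_le {n k : ℕ} {Γ : Set (En n)} (hcomp : IsCompact Γ)
    (hman : IsC1Submanifold k Γ) {ε : ℝ} (hε : 0 < ε) :
    ∃ s > 0, ∀ x p q, p ∈ Γ → q ∈ Γ → dist q p < s →
      infDist x Γ = dist x p → ⟪x - p, q - p⟫ ≤ ε * ‖x - p‖ * ‖q - p‖ := by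
  choose! δ hδ hloc using fun p₀ (hp₀ : p₀ ∈ Γ) => hman.exists_ball_inner_le hp₀ hε
  obtain ⟨s, hs, hcover⟩ := lebesgue_number_lemma_of_metric hcomp
    (c := fun p₀ : Γ => ball (p₀ : En n) (δ p₀)) (fun _ => isOpen_ball)
    (fun p hp => mem_iUnion.2 ⟨⟨p, hp⟩, mem_ball_self (hδ p hp)⟩)
  refine ⟨s, hs, fun x p q hp hq hqp hxp => ?_⟩
  obtain ⟨⟨p₀, hp₀⟩, hsub⟩ := hcover p hp
  exact hloc p₀ hp₀ x p q hp hq (hsub (mem_ball_self hs)) (hsub hqp) hxp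

lemma IsC1Submanifold.exists_sq_le_infDist_ray {n k : ℕ} {Γ : Set (En n)} (hcomp : IsCompact Γ)
    (hman : IsC1Submanifold k Γ) {ε : ℝ} (hε : 0 < ε) :
    ∃ r > 0, ∀ x p, p ∈ Γ → infDist x Γ = dist x p → ∀ s : ℝ, 0 ≤ s → s * dist x p ≤ r →
      (1 - ε ^ 2) * (s * dist x p) ^ 2 ≤ infDist (p + s • (x - p)) Γ ^ 2 := by
  obtain ⟨s₀, hs₀, htan⟩ := hman.exists_inner_le hcomp hε
  refine ⟨s₀ / 2, half_pos hs₀, fun x p hp hxp s hs hsr => ?_⟩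
  set z := p + s • (x - p)
  set t := s * dist x p with ht_def
  have hzp : z - p = s • (x - p) := add_sub_cancel_left _ _
  have ht : ‖z - p‖ = t := by rw [hzp, norm_smul, Real.norm_of_nonneg hs, ht_def, dist_eq_norm]
  have ht0 : 0 ≤ t := by positivity
  obtain ⟨q, hq, hzq⟩ := hcomp.exists_infDist_eq_dist ⟨p, hp⟩ z
  rw [hzq]
  rcases lt_or_ge (dist q p) s₀ with hnear | hfar
  · have hinner : ⟪z - p, q - p⟫ ≤ ε * t * ‖q - p‖ := by
      calc ⟪z - p, q - p⟫ = s * ⟪x - p, q - p⟫ := by rw [hzp, real_inner_smul_left]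
        _ ≤ s * (ε * ‖x - p‖ * ‖q - p‖) := by gcongr; exact htan x p q hp hq hnear hxp
        _ = ε * t * ‖q - p‖ := by rw [ht_def, dist_eq_norm]; ring
    have hsq : dist z q ^ 2 = t ^ 2 - 2 * ⟪z - p, q - p⟫ + ‖q - p‖ ^ 2 := by
      rw [dist_eq_norm, ← sub_sub_sub_cancel_right z q p, norm_sub_sq_real, ht]
    nlinarith [sq_nonneg (‖q - p‖ - ε * t)]
  · have htq : t ≤ dist z q := by
      linarith [dist_triangle q z p, dist_comm z q, dist_eq_norm z p]
    nlinarith [sq_nonneg ε, mul_self_le_mul_self ht0 htq]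

lemma dist_emb1 {n : ℕ} (a c : En n) (b e : ℝ) :
    dist (emb1 n (a, b)) (emb1 n (c, e)) = √(dist a c ^ 2 + dist b e ^ 2) :=
  WithLp.prod_dist_eq_of_L2 _ _

section Wset

variable {n : ℕ} {Γ : Set (En n)} {ρ : ℝ} {x : En n} {y : ℝ}

lemma sq_infDist_le_of_mem_Wset (hW : emb1 n (x, y) ∈ Wset Γ ρ) {z : En n}
    (hz : infDist z Γ ≤ 2 * ρ) : infDist z Γ ^ 2 ≤ dist x z ^ 2 + y ^ 2 := by
  have hout : ¬ dist (emb1 n (x, y)) (emb1 n (z, 0)) < infDist z Γ := fun hlt =>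
    hW.2 (Or.inr (mem_iUnion₂.2 ⟨z, hz, hlt⟩))
  rwa [not_lt, dist_emb1, Real.dist_eq, sub_zero, sq_abs,
    Real.le_sqrt infDist_nonneg (by positivity)] at hout

lemma infDist_le_of_mem_Wset (hW : emb1 n (x, y) ∈ Wset Γ ρ) :
    infDist x Γ ≤ y := by
  have hy : 0 < y := hW.1.1
  have hyρ : y < ρ := hW.1.2
  have hvert : dist (emb1 n (x, y)) (emb1 n (x, 0)) = y := by
    rw [dist_emb1, dist_self, Real.dist_eq, sub_zero, sq_abs, zero_pow two_ne_zero, zero_add,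
      Real.sqrt_sq hy.le]
  have hnear : infDist x Γ ≤ 2 * ρ := by
    by_contra! hfar
    exact hW.2 (Or.inl (mem_iUnion₂.2 ⟨x, hfar, mem_ball.2 (by linarith)⟩))
  have hsq := sq_infDist_le_of_mem_Wset hW hnear
  rw [dist_self, zero_pow two_ne_zero, zero_add] at hsq
  exact (pow_le_pow_iff_left₀ infDist_nonneg hy.le two_ne_zero).1 hsq

end Wset

lemma exists_infDist_le_mul_of_mem_Wset {n k : ℕ} {Γ : Set (En n)} (hne : Γ.Nonempty)
    (hcomp : IsCompact Γ) (hman : IsC1Submanifold k Γ) {ρ : ℝ} (hρ : 0 < ρ) {C : ℝ}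
    (hC : 0 < C) :
    ∃ a > 0, ∀ x y, emb1 n (x, y) ∈ Wset Γ ρ → y < a → infDist x Γ ≤ C * y := by
  set M : ℝ := 1 + (C ^ 2)⁻¹ with hM_def
  have hM : 1 < M := lt_add_of_pos_right 1 (by positivity)
  obtain ⟨r, hr, hray⟩ := hman.exists_sq_le_infDist_ray hcomp (ε := M⁻¹) (by positivity)
  refine ⟨min r (2 * ρ) / M, by positivity, fun x y hW hya => ?_⟩
  obtain ⟨p, hp, hxp⟩ := hcomp.exists_infDist_eq_dist hne x
  set d := dist x p
  have hdy : d ≤ y := hxp ▸ infDist_le_of_mem_Wset hW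
  have hMd : M * d ≤ min r (2 * ρ) := by
    rw [lt_div_iff₀' (by positivity)] at hya
    nlinarith
  set z := p + M • (x - p)
  have hzp : dist z p = M * d := by
    rw [dist_eq_norm, add_sub_cancel_left, norm_smul, Real.norm_of_nonneg (by positivity),
      ← dist_eq_norm]
  have hxz : dist x z = (M - 1) * d := by
    rw [dist_eq_norm, show x - z = (1 - M) • (x - p) by simp only [z, sub_smul, one_smul]; abel,
      norm_smul, Real.norm_of_nonpos (by linarith), ← dist_eq_norm, neg_sub]
  have hz_lower := hray x p hp hxp M (by positivity) (hMd.trans (min_le_left _ _))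
  have hz_upper := sq_infDist_le_of_mem_Wset hW
    ((infDist_le_dist_of_mem hp).trans (hzp ▸ hMd.trans (min_le_right _ _)))
  have hsq : d ^ 2 ≤ (C * y) ^ 2 := by
    have hCM : C ^ 2 * (M - 1) = 1 := by rw [hM_def]; field_simp; ring
    have hM1 : (1 - M⁻¹ ^ 2) * (M * d) ^ 2 = (M ^ 2 - 1) * d ^ 2 := by field_simp
    rw [hM1] at hz_lower
    rw [hxz] at hz_upper
    have hgap : 2 * (M - 1) * d ^ 2 ≤ y ^ 2 := by nlinarith
    nlinarith [mul_le_mul_of_nonneg_left hgap (sq_nonneg C), sq_nonneg (C * y)]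
  rw [hxp]
  exact (pow_le_pow_iff_left₀ dist_nonneg (mul_pos hC hW.1.1).le two_ne_zero).1 hsq

theorem statement5_general
    (n k : ℕ)
    (Γ : Set (En n)) (hne : Γ.Nonempty) (hcomp : IsCompact Γ)
    (hman : IsC1Submanifold k Γ)
    (ρ : ℝ) (hρ : 0 < ρ)
    (x : ℕ → En n) (y : ℕ → ℝ)
    (hW : ∀ i, emb1 n (x i, y i) ∈ Wset Γ ρ)
    (hy : Filter.Tendsto y Filter.atTop (nhds 0)) :
    Filter.Tendsto (fun i => Metric.infDist (x i) Γ / y i) Filter.atTop (nhds 0) := by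
  have hy0 : ∀ i, 0 < y i := fun i => (hW i).1.1
  refine tendsto_order.2 ⟨fun b hb => Eventually.of_forall fun i =>
    hb.trans_le (div_nonneg infDist_nonneg (hy0 i).le), fun ε hε => ?_⟩
  obtain ⟨a, ha, hbound⟩ :=
    exists_infDist_le_mul_of_mem_Wset hne hcomp hman hρ (half_pos hε)
  filter_upwards [hy.eventually (gt_mem_nhds ha)] with i hi
  rw [div_lt_iff₀ (hy0 i)]
  linarith [hbound (x i) (y i) (hW i) hi, hy0 i, mul_pos hε (hy0 i)]

/-- with `Γ ⊂ ℝⁿ` a nonempty compact C¹ embedded `k`-submanifold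
(`1 ≤ k ≤ n−1`), `ρ > 0` with `δ(p, r) > r/2` for all `p ∈ Γ` and `0 < r < 2ρ`, and `W` as
defined above: if `(x_i, y_i)` is a sequence of points of `W` with `y_i → 0+`, then
`d(x_i)/y_i → 0`, where `d(x) = dist(x, Γ)`. -/
theorem statement5
    (n k : ℕ) (hk : 1 ≤ k) (hkn : k ≤ n - 1)
    (Γ : Set (En n)) (hne : Γ.Nonempty) (hcomp : IsCompact Γ)
    (hman : IsC1Submanifold k Γ)
    (ρ : ℝ) (hρ : 0 < ρ)
    (hδ : ∀ p ∈ Γ, ∀ r : ℝ, 0 < r → r < 2 * ρ → r / 2 < deltaG Γ p r)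
    (x : ℕ → En n) (y : ℕ → ℝ)
    (hW : ∀ i, emb1 n (x i, y i) ∈ Wset Γ ρ)
    (hy : Filter.Tendsto y Filter.atTop (nhds 0)) :
    Filter.Tendsto (fun i => Metric.infDist (x i) Γ / y i) Filter.atTop (nhds 0) :=
  statement5_general n k Γ hne hcomp hman ρ hρ x y hW hy
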